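/- Let (A, μ, α) be a multiplicative Hom-algebra over a field k of characteristic 0 that is either a right Hom-alternative algebra or a non-commutative Hom-Jordan algebra. Then A is Hom-power associative. -/

import Mathlib

/-!
Albert's proof that third and fourth power associativity imply power associativity in
characteristic `0`, twisted by `α`. Assume Hom-power associativity in all degrees below `n` and
write `S i = α^(n-i-1)(x^i) α^(i-1)(x^(n-i))`, so that `x^n = S (n-1)`. Both hypotheses give
`as(y, y, y) = 0` and `as(y², α y, α y) = 0`; substituting suitable `α`-twists of lower powers of
`x` into the full linearizations of these two identities turns them into linear relations among
the `S i`. The cubic one gives `S i = S (n-i)`, the quartic one the recurrence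
`12 x^n + 6 S t + 6 S (t+2) = 8 S 2 + 16 S (t+1)`. Starting from `S 1 = S (n-1) = x^n`, the
recurrence makes `S (t+1) - x^n` a multiple `f t • (S 2 - x^n)` with `f` positive and increasing
for `t ≥ 1` (`albertSeq`), so `S (n-1) = x^n` forces `S 2 = x^n` and then `S i = x^n` for all `i`.
-/

variable {k A : Type*} [Field k] [CharZero k] [AddCommGroup A] [Module k A]

/-- The `n`-th Hom-power: `x^1 = x`, `x^n = x^{n-1} · α^{n-2}(x)`. -/
def homPow (μ : A →ₗ[k] A →ₗ[k] A) (α : A →ₗ[k] A) (x : A) : ℕ → A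
  | 0 => x
  | 1 => x
  | n + 2 => μ (homPow μ α x (n + 1)) ((α ^ n) x)

/-- `A` is `n`-th Hom-power associative. -/
def IsNthHomPowerAssoc (μ : A →ₗ[k] A →ₗ[k] A) (α : A →ₗ[k] A) (n : ℕ) : Prop :=
  ∀ (x : A) (i : ℕ), 1 ≤ i → i ≤ n - 1 →
    homPow μ α x n =
      μ ((α ^ (n - i - 1)) (homPow μ α x i)) ((α ^ (i - 1)) (homPow μ α x (n - i)))

/-- `A` is Hom-power associative. -/
def IsHomPowerAssoc (μ : A →ₗ[k] A →ₗ[k] A) (α : A →ₗ[k] A) : Prop :=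
  ∀ n : ℕ, 2 ≤ n → IsNthHomPowerAssoc μ α n

/-- `A` is up to `n`-th Hom-power associative. -/
def IsUpToNthHomPowerAssoc (μ : A →ₗ[k] A →ₗ[k] A) (α : A →ₗ[k] A) (n : ℕ) : Prop :=
  ∀ m : ℕ, 2 ≤ m → m ≤ n → IsNthHomPowerAssoc μ α m

/-- The Hom-algebra `(A, μ, α)` is multiplicative. -/
def IsMultiplicative (μ : A →ₗ[k] A →ₗ[k] A) (α : A →ₗ[k] A) : Prop :=
  ∀ x y : A, α (μ x y) = μ (α x) (α y)


/-- The Hom-associator `as(x,y,z) = (xy)α(z) − α(x)(yz)`. -/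
def homAssoc (μ : A →ₗ[k] A →ₗ[k] A) (α : A →ₗ[k] A) (x y z : A) : A :=
  μ (μ x y) (α z) - μ (α x) (μ y z)

/-- `A` is right Hom-alternative: `as(y,x,x) = 0`. -/
def IsRightHomAlternative (μ : A →ₗ[k] A →ₗ[k] A) (α : A →ₗ[k] A) : Prop :=
  ∀ x y : A, homAssoc μ α y x x = 0

/-- `A` is a non-commutative Hom-Jordan algebra: it is Hom-flexible and satisfies
`as(x²,α(y),α(x)) = 0`. -/
def IsNoncommHomJordan (μ : A →ₗ[k] A →ₗ[k] A) (α : A →ₗ[k] A) : Prop :=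
  (∀ x y : A, homAssoc μ α x y x = 0) ∧
  (∀ x y : A, homAssoc μ α (μ x x) (α y) (α x) = 0)


section Polarization

variable {M N : Type*} [AddCommGroup M] [AddCommGroup N]

theorem polarization_three (F : M → M → M → N)
    (h₁ : ∀ a a' b c, F (a + a') b c = F a b c + F a' b c)
    (h₂ : ∀ a b b' c, F a (b + b') c = F a b c + F a b' c)
    (h₃ : ∀ a b c c', F a b (c + c') = F a b c + F a b c')
    (hF : ∀ a, F a a a = 0) (u v w : M) :
    F u v w + F u w v + F v u w + F v w u + F w u v + F w v u = 0 := by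
  have huvw := hF (u + v + w)
  have huv := hF (u + v)
  have huw := hF (u + w)
  have hvw := hF (v + w)
  simp only [h₁, h₂, h₃, hF, add_zero, zero_add] at huvw huv huw hvw
  linear_combination (norm := abel) huvw - huv - huw - hvw

theorem polarization_four (F : M → M → M → M → N)
    (h₁ : ∀ a a' b c d, F (a + a') b c d = F a b c d + F a' b c d)
    (h₂ : ∀ a b b' c d, F a (b + b') c d = F a b c d + F a b' c d)
    (h₃ : ∀ a b c c' d, F a b (c + c') d = F a b c d + F a b c' d)
    (h₄ : ∀ a b c d d', F a b c (d + d') = F a b c d + F a b c d')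
    (hF : ∀ a, F a a a a = 0) (u v w z : M) :
    F u v w z + F u v z w + F u w v z + F u w z v + F u z v w + F u z w v +
      F v u w z + F v u z w + F v w u z + F v w z u + F v z u w + F v z w u +
      F w u v z + F w u z v + F w v u z + F w v z u + F w z u v + F w z v u +
      F z u v w + F z u w v + F z v u w + F z v w u + F z w u v + F z w v u = 0 := by
  have h1 := hF (u + v + w + z)
  have h2 := hF (u + v + w)
  have h3 := hF (u + v + z)
  have h4 := hF (u + w + z)
  have h5 := hF (v + w + z)
  have h6 := hF (u + v)
  have h7 := hF (u + w)
  have h8 := hF (u + z)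
  have h9 := hF (v + w)
  have h10 := hF (v + z)
  have h11 := hF (w + z)
  simp only [h₁, h₂, h₃, h₄, hF, add_zero, zero_add] at h1 h2 h3 h4 h5 h6 h7 h8 h9 h10 h11
  linear_combination (norm := abel) h1 - h2 - h3 - h4 - h5 + h6 + h7 + h8 + h9 + h10 + h11

end Polarization

section HomAlgebra

variable {K V : Type*} [Field K] [AddCommGroup V] [Module K V]
  {μ : V →ₗ[K] V →ₗ[K] V} {α : V →ₗ[K] V}

theorem Module.End.pow_apply_pow_apply (f : Module.End K V) (m n : ℕ) (v : V) :
    (f ^ m) ((f ^ n) v) = (f ^ (m + n)) v := by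
  rw [pow_add, Module.End.mul_apply]

theorem Module.End.apply_pow_apply (f : Module.End K V) (n : ℕ) (v : V) :
    f ((f ^ n) v) = (f ^ (n + 1)) v := by
  rw [pow_succ', Module.End.mul_apply]

variable (μ α) in
theorem homAssoc_add_left (a a' b c : V) :
    homAssoc μ α (a + a') b c = homAssoc μ α a b c + homAssoc μ α a' b c := by
  simp only [homAssoc, map_add, LinearMap.add_apply]
  abel

variable (μ α) in
theorem homAssoc_add_middle (a b b' c : V) :
    homAssoc μ α a (b + b') c = homAssoc μ α a b c + homAssoc μ α a b' c := by
  simp only [homAssoc, map_add, LinearMap.add_apply]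
  abel

variable (μ α) in
theorem homAssoc_add_right (a b c c' : V) :
    homAssoc μ α a b (c + c') = homAssoc μ α a b c + homAssoc μ α a b c' := by
  simp only [homAssoc, map_add]
  abel

theorem IsMultiplicative.pow_apply_mul (hmul : IsMultiplicative μ α) (s : ℕ) (u v : V) :
    (α ^ s) (μ u v) = μ ((α ^ s) u) ((α ^ s) v) := by
  induction s with
  | zero => simp
  | succ s ih =>
    simp only [pow_succ', Module.End.mul_apply, ih]
    exact hmul _ _

variable (μ α) in
def homPowSplit (x : V) (n i : ℕ) : V :=
  μ ((α ^ (n - i - 1)) (homPow μ α x i)) ((α ^ (i - 1)) (homPow μ α x (n - i)))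

theorem homPow_eq_homPowSplit_pred (x : V) {n : ℕ} (hn : 2 ≤ n) :
    homPow μ α x n = homPowSplit μ α x n (n - 1) := by
  obtain ⟨m, rfl⟩ : ∃ m, n = m + 2 := ⟨n - 2, by omega⟩
  simp [homPowSplit, homPow]

theorem IsNthHomPowerAssoc.mul_pow_apply_homPow (hmul : IsMultiplicative μ α) {m i j : ℕ}
    (h : IsNthHomPowerAssoc μ α m) (hij : i + j = m) (hi : 1 ≤ i) (hj : 1 ≤ j) (x : V)
    {e p q : ℕ} (hp : p = e + (j - 1)) (hq : q = e + (i - 1)) :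
    μ ((α ^ p) (homPow μ α x i)) ((α ^ q) (homPow μ α x j)) = (α ^ e) (homPow μ α x m) := by
  subst hij hp hq
  rw [h x i hi (by omega), show i + j - i - 1 = j - 1 by omega, Nat.add_sub_cancel_left,
    hmul.pow_apply_mul, Module.End.pow_apply_pow_apply, Module.End.pow_apply_pow_apply]

theorem homAssoc_pow_apply_homPow (hmul : IsMultiplicative μ α) {n : ℕ}
    (IH : IsUpToNthHomPowerAssoc μ α (n - 1)) (x : V) {a b c : ℕ}
    (ha : 1 ≤ a) (hb : 1 ≤ b) (hc : 1 ≤ c) (habc : a + b + c = n) :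
    homAssoc μ α ((α ^ (n - a - 2)) (homPow μ α x a)) ((α ^ (n - b - 2)) (homPow μ α x b))
        ((α ^ (n - c - 2)) (homPow μ α x c)) =
      homPowSplit μ α x n (n - c) - homPowSplit μ α x n a := by
  have hab : μ ((α ^ (n - a - 2)) (homPow μ α x a)) ((α ^ (n - b - 2)) (homPow μ α x b)) =
      (α ^ (c - 1)) (homPow μ α x (n - c)) :=
    (IH (n - c) (by omega) (by omega)).mul_pow_apply_homPow hmul (by omega) ha hb x
      (by omega) (by omega)
  have hbc : μ ((α ^ (n - b - 2)) (homPow μ α x b)) ((α ^ (n - c - 2)) (homPow μ α x c)) =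
      (α ^ (a - 1)) (homPow μ α x (n - a)) :=
    (IH (n - a) (by omega) (by omega)).mul_pow_apply_homPow hmul (by omega) hb hc x
      (by omega) (by omega)
  rw [homAssoc, hab, hbc, Module.End.apply_pow_apply, Module.End.apply_pow_apply, homPowSplit,
    homPowSplit, show n - (n - c) = c by omega, show n - c - 2 + 1 = n - c - 1 by omega,
    show n - a - 2 + 1 = n - a - 1 by omega]

theorem homAssoc_mul_pow_apply_homPow (hmul : IsMultiplicative μ α) {n : ℕ}
    (IH : IsUpToNthHomPowerAssoc μ α (n - 1)) (x : V) {a b c d : ℕ}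
    (ha : 1 ≤ a) (hb : 1 ≤ b) (hc : 1 ≤ c) (hd : 1 ≤ d) (habcd : a + b + c + d = n) :
    homAssoc μ α (μ ((α ^ (n - a - 3)) (homPow μ α x a)) ((α ^ (n - b - 3)) (homPow μ α x b)))
        (α ((α ^ (n - c - 3)) (homPow μ α x c))) (α ((α ^ (n - d - 3)) (homPow μ α x d))) =
      homPowSplit μ α x n (n - d) - homPowSplit μ α x n (a + b) := by
  have hab : μ ((α ^ (n - a - 3)) (homPow μ α x a)) ((α ^ (n - b - 3)) (homPow μ α x b)) =
      (α ^ (c + d - 2)) (homPow μ α x (a + b)) :=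
    (IH (a + b) (by omega) (by omega)).mul_pow_apply_homPow hmul rfl ha hb x
      (by omega) (by omega)
  have habc :
      μ ((α ^ (c + d - 2)) (homPow μ α x (a + b))) ((α ^ (n - c - 3 + 1)) (homPow μ α x c)) =
      (α ^ (d - 1)) (homPow μ α x (n - d)) :=
    (IH (n - d) (by omega) (by omega)).mul_pow_apply_homPow hmul (by omega) (by omega) hc x
      (by omega) (by omega)
  have hcd :
      μ ((α ^ (n - c - 3 + 1)) (homPow μ α x c)) ((α ^ (n - d - 3 + 1)) (homPow μ α x d)) =
      (α ^ (a + b - 1)) (homPow μ α x (n - (a + b))) :=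
    (IH (n - (a + b)) (by omega) (by omega)).mul_pow_apply_homPow hmul (by omega) hc hd x
      (by omega) (by omega)
  simp only [homAssoc, hab, Module.End.apply_pow_apply, habc, hcd, homPowSplit]
  rw [show n - (n - d) = d by omega, show n - d - 3 + 1 + 1 = n - d - 1 by omega,
    show c + d - 2 + 1 = n - (a + b) - 1 by omega]

theorem homPowSplit_add_three [CharZero K] (hmul : IsMultiplicative μ α)
    (h3 : ∀ y, homAssoc μ α y y y = 0)
    {n : ℕ} (IH : IsUpToNthHomPowerAssoc μ α (n - 1)) (x : V) {a b c : ℕ}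
    (ha : 1 ≤ a) (hb : 1 ≤ b) (hc : 1 ≤ c) (habc : a + b + c = n) :
    homPowSplit μ α x n (n - a) + homPowSplit μ α x n (n - b) + homPowSplit μ α x n (n - c) =
      homPowSplit μ α x n a + homPowSplit μ α x n b + homPowSplit μ α x n c := by
  have P := polarization_three (homAssoc μ α) (homAssoc_add_left μ α) (homAssoc_add_middle μ α)
    (homAssoc_add_right μ α) h3 ((α ^ (n - a - 2)) (homPow μ α x a))
    ((α ^ (n - b - 2)) (homPow μ α x b)) ((α ^ (n - c - 2)) (homPow μ α x c))
  simp (disch := omega) only [homAssoc_pow_apply_homPow hmul IH x] at P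
  linear_combination (norm := module) (2 : K)⁻¹ • P

theorem homPowSplit_symm [CharZero K] (hmul : IsMultiplicative μ α)
    (h3 : ∀ y, homAssoc μ α y y y = 0) {n : ℕ} (IH : IsUpToNthHomPowerAssoc μ α (n - 1)) (x : V)
    {j : ℕ} (hj : 1 ≤ j) (hjn : j ≤ n - 1) :
    homPowSplit μ α x n j = homPowSplit μ α x n (n - j) := by
  set D : ℕ → V := fun m ↦ homPowSplit μ α x n (n - m) - homPowSplit μ α x n m with hD
  have step : ∀ m, 1 ≤ m → m + 2 ≤ n → D (m + 1) = D m + D 1 := by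
    intro m hm hmn
    have h := homPowSplit_add_three hmul h3 IH x hm le_rfl (by omega : 1 ≤ n - m - 1)
      (by omega)
    rw [show n - (n - m - 1) = m + 1 by omega] at h
    simp only [hD, show n - (m + 1) = n - m - 1 by omega]
    linear_combination (norm := module) -h
  have hlin : ∀ m, 1 ≤ m → m ≤ n - 1 → D m = (m : K) • D 1 := by
    intro m hm
    induction m, hm using Nat.le_induction with
    | base => simp
    | succ m hm ih =>
      intro hmn
      rw [step m hm (by omega), ih (by omega)]
      push_cast
      module
  have hD1 : D 1 = 0 := by
    have h := hlin (n - 1) (by omega) le_rfl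
    have hneg : D (n - 1) = -D 1 := by simp only [hD, show n - (n - 1) = 1 by omega, neg_sub]
    rw [hneg, Nat.cast_sub (by omega)] at h
    have hn : (n : K) • D 1 = 0 := by linear_combination (norm := module) -h
    exact (smul_eq_zero.mp hn).resolve_left (Nat.cast_ne_zero.mpr (by omega))
  have h := hlin j hj hjn
  rw [hD1, smul_zero, hD, sub_eq_zero] at h
  exact h.symm

theorem homPowSplit_recurrence [CharZero K] (hmul : IsMultiplicative μ α)
    (h3 : ∀ y, homAssoc μ α y y y = 0) (h4 : ∀ y, homAssoc μ α (μ y y) (α y) (α y) = 0)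
    {n : ℕ} (IH : IsUpToNthHomPowerAssoc μ α (n - 1)) (x : V) {t : ℕ} (ht : 1 ≤ t)
    (htn : t + 3 ≤ n) :
    (12 : K) • homPow μ α x n + (6 : K) • homPowSplit μ α x n t +
        (6 : K) • homPowSplit μ α x n (t + 2) =
      (8 : K) • homPowSplit μ α x n 2 + (16 : K) • homPowSplit μ α x n (t + 1) := by
  obtain ⟨c, hc⟩ : ∃ c, t + c + 2 = n := ⟨n - t - 2, by omega⟩
  have P := polarization_four (fun u v w z ↦ homAssoc μ α (μ u v) (α w) (α z))
    (by intros; simp only [map_add, LinearMap.add_apply, homAssoc_add_left])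
    (by intros; simp only [map_add, homAssoc_add_left])
    (by intros; simp only [map_add, homAssoc_add_middle])
    (by intros; simp only [map_add, homAssoc_add_right]) h4
    ((α ^ (n - 1 - 3)) (homPow μ α x 1)) ((α ^ (n - 1 - 3)) (homPow μ α x 1))
    ((α ^ (n - t - 3)) (homPow μ α x t)) ((α ^ (n - c - 3)) (homPow μ α x c))
  simp (disch := omega) only [homAssoc_mul_pow_apply_homPow hmul IH x] at P
  have hsymm {j : ℕ} (hj : 1 ≤ j) (hjn : j ≤ n - 1) := homPowSplit_symm hmul h3 IH x hj hjn
  have e1 : homPowSplit μ α x n (n - 1) = homPow μ α x n :=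
    (homPow_eq_homPowSplit_pred x (by omega)).symm
  have e2 : homPowSplit μ α x n (n - t) = homPowSplit μ α x n t := (hsymm ht (by omega)).symm
  have e3 : homPowSplit μ α x n (n - c) = homPowSplit μ α x n (t + 2) := by
    rw [show n - c = t + 2 by omega]
  have e4 : homPowSplit μ α x n (1 + c) = homPowSplit μ α x n (t + 1) := by
    rw [hsymm (by omega) (by omega), show n - (1 + c) = t + 1 by omega]
  have e5 : homPowSplit μ α x n (c + 1) = homPowSplit μ α x n (t + 1) := by rw [add_comm, e4]
  have e6 : homPowSplit μ α x n (t + c) = homPowSplit μ α x n 2 := by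
    rw [hsymm (by omega) (by omega), show n - (t + c) = 2 by omega]
  simp only [e1, e2, e3, e4, e5, e6, add_comm c t, add_comm 1 t] at P
  linear_combination (norm := module) P

end HomAlgebra

section Recurrence

def albertSeq : ℕ → ℚ
  | 0 => 0
  | 1 => 1
  | t + 2 => (8 * albertSeq (t + 1) - 3 * albertSeq t + 4) / 3

theorem natCast_le_albertSeq_and_add_one_le_succ (t : ℕ) :
    (t : ℚ) ≤ albertSeq t ∧ albertSeq t + 1 ≤ albertSeq (t + 1) := by
  induction t with
  | zero => norm_num [albertSeq]
  | succ t ih =>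
    obtain ⟨h₁, h₂⟩ := ih
    refine ⟨by push_cast; linarith, ?_⟩
    rw [show albertSeq (t + 2) = (8 * albertSeq (t + 1) - 3 * albertSeq t + 4) / 3 from rfl]
    linarith

theorem albertSeq_ne_zero {t : ℕ} (ht : t ≠ 0) : albertSeq t ≠ 0 := by
  have h := (natCast_le_albertSeq_and_add_one_le_succ t).1
  have : (1 : ℚ) ≤ t := by exact_mod_cast Nat.one_le_iff_ne_zero.mpr ht
  linarith

variable {K W : Type*} [Field K] [CharZero K] [AddCommGroup W] [Module K W]

theorem eq_albertSeq_smul_of_recurrence {E : ℕ → W} {N : ℕ} (h0 : E 0 = 0)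
    (hrec : ∀ t, t + 2 ≤ N →
      (6 : K) • E t + (6 : K) • E (t + 2) = (8 : K) • E 1 + (16 : K) • E (t + 1)) :
    ∀ t ≤ N, E t = (albertSeq t : K) • E 1 := by
  intro t
  induction t using Nat.twoStepInduction with
  | zero => simp [h0, albertSeq]
  | one => simp [albertSeq]
  | more t ih₀ ih₁ =>
    intro ht
    have hcoeff :
        (albertSeq (t + 2) : K) = (8 * albertSeq (t + 1) - 3 * albertSeq t + 4) / 3 := by
      rw [show albertSeq (t + 2) = (8 * albertSeq (t + 1) - 3 * albertSeq t + 4) / 3 from rfl]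
      push_cast
      ring
    rw [hcoeff]
    linear_combination (norm := module) (6 : K)⁻¹ • hrec t ht + ((8 : K) / 3) • ih₁ (by omega) -
      ih₀ (by omega)

theorem eq_zero_of_recurrence {E : ℕ → W} {N : ℕ} (h0 : E 0 = 0) (hN : E N = 0)
    (hrec : ∀ t, t + 2 ≤ N →
      (6 : K) • E t + (6 : K) • E (t + 2) = (8 : K) • E 1 + (16 : K) • E (t + 1)) :
    ∀ t ≤ N, E t = 0 := by
  have hE := eq_albertSeq_smul_of_recurrence h0 hrec
  rcases Nat.eq_zero_or_pos N with rfl | hN₀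
  · intro t ht
    rwa [Nat.le_zero.mp ht]
  have hE₁ : E 1 = 0 := by
    have h := hE N le_rfl
    rw [hN, eq_comm, smul_eq_zero, Rat.cast_eq_zero] at h
    exact h.resolve_left (albertSeq_ne_zero hN₀.ne')
  intro t ht
  rw [hE t ht, hE₁, smul_zero]

end Recurrence

section HomPowerAssoc

variable {K V : Type*} [Field K] [CharZero K] [AddCommGroup V] [Module K V]
  {μ : V →ₗ[K] V →ₗ[K] V} {α : V →ₗ[K] V}

theorem isNthHomPowerAssoc_of_isUpToNthHomPowerAssoc_pred (hmul : IsMultiplicative μ α)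
    (h3 : ∀ y, homAssoc μ α y y y = 0) (h4 : ∀ y, homAssoc μ α (μ y y) (α y) (α y) = 0)
    {n : ℕ} (hn : 2 ≤ n) (IH : IsUpToNthHomPowerAssoc μ α (n - 1)) :
    IsNthHomPowerAssoc μ α n := by
  intro x i hi hin
  have hpred := homPow_eq_homPowSplit_pred (μ := μ) (α := α) x hn
  have hE := eq_zero_of_recurrence (K := K) (N := n - 2)
    (E := fun t ↦ homPowSplit μ α x n (t + 1) - homPow μ α x n)
    (by rw [sub_eq_zero, hpred]; exact homPowSplit_symm hmul h3 IH x le_rfl (by omega))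
    (by rw [show n - 2 + 1 = n - 1 by omega, hpred, sub_self])
    (fun t ht ↦ by
      have h := homPowSplit_recurrence hmul h3 h4 IH x (t := t + 1) (by omega) (by omega)
      linear_combination (norm := module) h)
  have h := hE (i - 1) (by omega)
  rw [Nat.sub_add_cancel hi, sub_eq_zero] at h
  exact h.symm

theorem IsMultiplicative.isHomPowerAssoc (hmul : IsMultiplicative μ α)
    (h3 : ∀ y, homAssoc μ α y y y = 0) (h4 : ∀ y, homAssoc μ α (μ y y) (α y) (α y) = 0) :
    IsHomPowerAssoc μ α := by
  have hupTo : ∀ n, IsUpToNthHomPowerAssoc μ α n := by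
    intro n
    induction n with
    | zero => intro m hm hm'; omega
    | succ n ih =>
      intro m hm hmn
      rcases hmn.lt_or_eq with hmn | rfl
      · exact ih m hm (by omega)
      · exact isNthHomPowerAssoc_of_isUpToNthHomPowerAssoc_pred hmul h3 h4 hm ih
  exact fun n hn ↦ hupTo n n hn le_rfl

end HomPowerAssoc

/-- Corollary: multiplicative right Hom-alternative and multiplicative
non-commutative Hom-Jordan algebras are Hom-power associative. -/
theorem stmt19 (μ : A →ₗ[k] A →ₗ[k] A) (α : A →ₗ[k] A)
    (hmul : IsMultiplicative μ α)
    (h : IsRightHomAlternative μ α ∨ IsNoncommHomJordan μ α) :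
    IsHomPowerAssoc μ α := by
  refine hmul.isHomPowerAssoc (fun x ↦ ?_) (fun x ↦ ?_) <;> rcases h with h | h
  · exact h x x
  · exact h.1 x x
  · exact h (α x) (μ x x)
  · exact h.2 x x
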